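/- arXiv:1009.3407 — 4 statements merged into one kernel-verified Lean document; each statement's English description precedes it below -/
import Mathlib

section
/- Let T > 0 and consider the circle ℝ/Tℤ. Let θ ∈ ℝ/Tℤ with θ ≠ 0, let a ∈ ℝ and let s be a real number with s > T/2. Then the translates by integer multiples of θ of the open arc A = {x mod T : a < x < a + s} cover the entire circle: for every y ∈ ℝ/Tℤ there exists an integer n such that y ∈ n·θ + A. -/
/-- In ℝ, any open interval of length `s > t > 0` contains a point `v + k*t`. -/
lemma exists_int_mul_mem_Ioo (t v a s : ℝ) (ht : 0 < t) (hts : t < s) :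
    ∃ k : ℤ, a < v + k * t ∧ v + k * t < a + s := by
  refine ⟨⌊(a - v) / t⌋ + 1, ?_, ?_⟩
  · have h := Int.lt_floor_add_one ((a - v) / t)
    have := (div_lt_iff₀ ht).mp h
    push_cast
    linarith
  · have h := Int.floor_le ((a - v) / t)
    have h2 : (⌊(a - v) / t⌋ : ℝ) * t ≤ a - v := (le_div_iff₀ ht).mp h
    push_cast
    nlinarith

lemma coe_add_int_mul (T v t : ℝ) (k : ℤ) :
    ((v + k * t : ℝ) : AddCircle T) = (v : AddCircle T) + k • (t : AddCircle T) := by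
  rw [← AddCircle.coe_zsmul, zsmul_eq_mul, ← QuotientAddGroup.mk_add]

/-- Entire Circle lemma: in the circle `ℝ/Tℤ`, the translates by integer multiples of a
nontrivial rotation `θ` of an open arc of length `s > T/2` cover the whole circle. -/
theorem translates_of_long_arc_cover_circle
    (T : ℝ) (hT : 0 < T) (θ : AddCircle T) (hθ : θ ≠ 0)
    (a : ℝ) (s : ℝ) (hs : T / 2 < s) :
    ∀ y : AddCircle T, ∃ n : ℤ, ∃ x : ℝ,
      a < x ∧ x < a + s ∧ y = n • θ + (x : AddCircle T) := by
  intro y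
  induction θ using QuotientAddGroup.induction_on with
  | H u =>
  induction y using QuotientAddGroup.induction_on with
  | H v =>
  set t : ℝ := toIcoMod hT 0 u with ht_def
  have htmem := toIcoMod_mem_Ico' hT u
  have hcoe : (t : AddCircle T) = (u : AddCircle T) := by
    have h1 : u - t = toIcoDiv hT 0 u • T := self_sub_toIcoMod hT 0 u
    rw [zsmul_eq_mul] at h1
    rw [← sub_eq_zero, ← QuotientAddGroup.mk_sub, AddCircle.coe_eq_zero_iff]
    exact ⟨-(toIcoDiv hT 0 u), by rw [zsmul_eq_mul]; push_cast; linarith⟩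
  have ht0 : 0 < t := by
    rcases lt_or_eq_of_le htmem.1 with h | h
    · exact h
    · exfalso; apply hθ
      rw [← hcoe, ht_def, ← h]
      simp
  by_cases hhalf : t < s
  · obtain ⟨k, hk1, hk2⟩ := exists_int_mul_mem_Ioo t v a s ht0 hhalf
    refine ⟨-k, v + k * t, hk1, hk2, ?_⟩
    rw [coe_add_int_mul, hcoe, neg_zsmul]
    abel
  · push_neg at hhalf
    have ht2 : t < T := htmem.2
    have h1 : 0 < T - t := by linarith
    have h2 : T - t < s := by linarith
    obtain ⟨k, hk1, hk2⟩ := exists_int_mul_mem_Ioo (T - t) v a s h1 h2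
    refine ⟨k, v + k * (T - t), hk1, hk2, ?_⟩
    have hcoe2 : ((T - t : ℝ) : AddCircle T) = -(u : AddCircle T) := by
      have hTz : ((T : ℝ) : AddCircle T) = 0 := by
        rw [AddCircle.coe_eq_zero_iff]; exact ⟨1, by simp⟩
      rw [← hcoe, QuotientAddGroup.mk_sub, hTz]
      abel
    rw [coe_add_int_mul, hcoe2, smul_neg]
    abel
end

section
/- Let Γ be a simple graph on a vertex set V, and let a group H act on V preserving adjacency (for all g ∈ H, if x and y are adjacent then g • x and g • y are adjacent). Let T ⊆ H be a generating set of H, and let Y₀ ⊆ V be a set of vertices such that the subgraph of Γ induced on Y₀ is connected (in particular nonempty) and such that Y₀ ∩ (t • Y₀) ≠ ∅ for every t ∈ T. Then the subgraph of Γ induced on the union ⋃_{h ∈ H} h • Y₀ of all H-translates of Y₀ is connected. -/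
open Pointwise

/-- If a group `H` acts on the vertices of a simple graph `Γ` preserving adjacency,
`T` generates `H`, and `Y₀` is a set of vertices inducing a connected subgraph with
`Y₀ ∩ t • Y₀ ≠ ∅` for each `t ∈ T`, then the union of all `H`-translates of `Y₀`
induces a connected subgraph. -/
theorem union_of_translates_connected
    (V : Type*) (Γ : SimpleGraph V)
    (H : Type*) [Group H] [MulAction H V]
    (hact : ∀ (g : H) (x y : V), Γ.Adj x y → Γ.Adj (g • x) (g • y))
    (T : Set H) (hT : Subgroup.closure T = ⊤)
    (Y₀ : Set V) (hY₀ : (Γ.induce Y₀).Connected)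
    (hmeet : ∀ t ∈ T, (Y₀ ∩ t • Y₀).Nonempty) :
    (Γ.induce (⋃ h : H, h • Y₀)).Connected := by
  classical
  set S : Set V := ⋃ h : H, h • Y₀ with hS
  have hmemS : ∀ (g : H) {x : V}, x ∈ Y₀ → g • x ∈ S := fun g {x} hx =>
    Set.mem_iUnion.2 ⟨g, Set.smul_mem_smul_set hx⟩
  have hY₀S : Y₀ ⊆ S := fun x hx => by
    have := hmemS (1 : H) hx
    simpa using this
  have hSinv : ∀ (g : H) {v : V}, v ∈ S → g • v ∈ S := by
    intro g v hv
    rcases Set.mem_iUnion.1 hv with ⟨h, y, hy, rfl⟩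
    rw [← mul_smul]
    exact hmemS _ hy
  -- congruence helper for endpoints of reachability
  have hcong : ∀ {u v w : ↥S}, (u : V) = (v : V) →
      (Γ.induce S).Reachable w u → (Γ.induce S).Reachable w v := by
    intro u v w h r
    exact (Subtype.ext h) ▸ r
  -- the hom `induce Y₀ →g induce S` given by `x ↦ g • x`
  let ψ : ∀ _ : H, Γ.induce Y₀ →g Γ.induce S := fun g =>
    ⟨fun x => ⟨g • x.1, hmemS g x.2⟩, fun hab => hact g _ _ hab⟩
  -- the hom `induce S →g induce S` given by `v ↦ g • v`
  let φ : ∀ _ : H, Γ.induce S →g Γ.induce S := fun g =>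
    ⟨fun v => ⟨g • v.1, hSinv g v.2⟩, fun hab => hact g _ _ hab⟩
  -- reach between translates of points of Y₀ by the same element
  have hreach : ∀ (g : H) (x y : V) (hx : x ∈ Y₀) (hy : y ∈ Y₀),
      (Γ.induce S).Reachable ⟨g • x, hmemS g hx⟩ ⟨g • y, hmemS g hy⟩ := by
    intro g x y hx hy
    exact (hY₀.preconnected ⟨x, hx⟩ ⟨y, hy⟩).map (ψ g)
  have hreach₀ : ∀ (x y : V) (hx : x ∈ Y₀) (hy : y ∈ Y₀),
      (Γ.induce S).Reachable ⟨x, hY₀S hx⟩ ⟨y, hY₀S hy⟩ := by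
    intro x y hx hy
    exact (hY₀.preconnected ⟨x, hx⟩ ⟨y, hy⟩).map (SimpleGraph.induceHomOfLE Γ hY₀S).toHom
  -- main claim
  have key : ∀ g : H, ∀ x y : V, ∀ (hx : x ∈ Y₀) (hy : y ∈ Y₀),
      (Γ.induce S).Reachable ⟨x, hY₀S hx⟩ ⟨g • y, hmemS g hy⟩ := by
    have main : ∀ g ∈ Subgroup.closure T, ∀ x y : V, ∀ (hx : x ∈ Y₀) (hy : y ∈ Y₀),
        (Γ.induce S).Reachable ⟨x, hY₀S hx⟩ ⟨g • y, hmemS g hy⟩ := by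
      intro g hg
      induction hg using Subgroup.closure_induction with
      | mem t ht =>
        intro x y hx hy
        obtain ⟨z, hzY, w, hwY, rfl⟩ := hmeet t ht
        exact (hreach₀ x (t • w) hx hzY).trans (hreach t w y hwY hy)
      | one =>
        intro x y hx hy
        exact hcong (one_smul (M := H) y).symm (hreach₀ x y hx hy)
      | mul a b ha hb iha ihb =>
        intro x y hx hy
        have h1 := iha x x hx hx
        have h2 : (Γ.induce S).Reachable ⟨a • x, hmemS a hx⟩
            ⟨a • (b • y), hSinv a (hmemS b hy)⟩ := (ihb x y hx hy).map (φ a)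
        exact h1.trans (hcong (mul_smul a b y).symm h2)
      | inv a ha iha =>
        intro x y hx hy
        have h1 : (Γ.induce S).Reachable ⟨a⁻¹ • y, hSinv a⁻¹ (hY₀S hy)⟩
            ⟨a⁻¹ • (a • x), hSinv a⁻¹ (hmemS a hx)⟩ := (iha y x hy hx).map (φ a⁻¹)
        exact (hcong (by show a⁻¹ • a • x = x; rw [← mul_smul, inv_mul_cancel, one_smul]) h1).symm
    intro g
    exact main g (hT ▸ Subgroup.mem_top g)
  obtain ⟨⟨x₀, hx₀⟩⟩ := hY₀.nonempty
  haveI : Nonempty ↥S := ⟨⟨x₀, hY₀S hx₀⟩⟩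
  refine ⟨fun u v => ?_⟩
  obtain ⟨u, hu⟩ := u
  obtain ⟨v, hv⟩ := v
  rcases Set.mem_iUnion.1 hu with ⟨g, x, hx, rfl⟩
  rcases Set.mem_iUnion.1 hv with ⟨h, y, hy, rfl⟩
  exact ((key g x x hx hx).symm).trans (key h x y hx hy)
end

section
/- Let Γ be a connected (preconnected, nonempty) simple graph on a vertex set V, and let a group H act on V preserving adjacency. Suppose H is finitely generated relative to finitely many vertex stabilizers: there exist a finite subset S ⊆ H and vertices v₁, …, vₙ ∈ V such that H is generated by S together with the stabilizers H_{v₁}, …, H_{vₙ} (where H_v = {h ∈ H : h • v = v}). Then for every finite set C ⊆ V of vertices there exists a finite set Y₀ ⊆ V containing C such that the subgraph of Γ induced on the H-invariant set Y = ⋃_{h ∈ H} h • Y₀ is connected, and H acts on Y with only finitely many vertex orbits. -/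
open Pointwise

theorem aux_walk_induce {V : Type*} {Γ : SimpleGraph V} {s : Set V} :
    ∀ {a b : V} (w : Γ.Walk a b), (∀ x ∈ w.support, x ∈ s) →
      ∀ (ha : a ∈ s) (hb : b ∈ s), (Γ.induce s).Reachable ⟨a, ha⟩ ⟨b, hb⟩
  | _, _, SimpleGraph.Walk.nil, _, _, _ => SimpleGraph.Reachable.refl _
  | a, b, SimpleGraph.Walk.cons h q, hsup, ha, hb => by
    have hq : ∀ x ∈ q.support, x ∈ s := fun x hx => hsup x (by simp [hx])
    have hm : _ ∈ s := hq _ q.start_mem_support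
    exact (SimpleGraph.Adj.reachable (by exact h : (Γ.induce s).Adj ⟨a, ha⟩ ⟨_, hm⟩)).trans
      (aux_walk_induce q hq hm hb)

/-- Initial subcomplex lemma (1-skeleton version): if `Γ` is a connected graph on `V`,
a group `H` acts on `V` preserving adjacency, and `H` is generated by a finite set `S`
together with the stabilizers of finitely many vertices `v₁, …, vₙ`, then every finite
set `C` of vertices is contained in a finite set `Y₀` such that the union `Y` of all
`H`-translates of `Y₀` induces a connected subgraph, and `H` acts on `Y` with finitely
many vertex orbits. -/
theorem initial_subcomplex
    (V : Type*) (Γ : SimpleGraph V) (hΓ : Γ.Connected)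
    (H : Type*) [Group H] [MulAction H V]
    (hact : ∀ (g : H) (x y : V), Γ.Adj x y → Γ.Adj (g • x) (g • y))
    (S : Finset H) (n : ℕ) (v : Fin n → V)
    (hgen : Subgroup.closure
      ((S : Set H) ∪ ⋃ i : Fin n, (MulAction.stabilizer H (v i) : Set H)) = ⊤)
    (C : Set V) (hC : C.Finite) :
    ∃ Y₀ : Set V, Y₀.Finite ∧ C ⊆ Y₀ ∧
      (Γ.induce (⋃ h : H, h • Y₀)).Connected ∧
      ∃ F : Set V, F.Finite ∧ F ⊆ (⋃ h : H, h • Y₀) ∧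
        ∀ y ∈ (⋃ h : H, h • Y₀), ∃ h : H, ∃ x ∈ F, h • x = y := by
  classical
  obtain ⟨p⟩ := hΓ.nonempty
  have hpre := hΓ.preconnected
  set w : ∀ t : V, Γ.Walk p t := fun t => (hpre p t).some with hw
  set T : Set V := C ∪ Set.range v ∪ (fun s : H => s • p) '' (S : Set H) with hT
  have hTfin : T.Finite :=
    ((hC.union (Set.finite_range v)).union ((S.finite_toSet).image _))
  set Y₀ : Set V := {p} ∪ ⋃ t ∈ T, {x | x ∈ (w t).support} with hY₀
  have hY₀fin : Y₀.Finite :=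
    (Set.finite_singleton p).union (hTfin.biUnion fun t _ => (w t).support.finite_toSet)
  have hpY₀ : p ∈ Y₀ := Or.inl rfl
  have hTY₀ : ∀ t ∈ T, ∀ x ∈ (w t).support, x ∈ Y₀ := by
    intro t ht x hx
    exact Or.inr (Set.mem_biUnion ht hx)
  have hCY₀ : C ⊆ Y₀ := fun c hc =>
    hTY₀ c (Or.inl (Or.inl hc)) c (w c).end_mem_support
  set Y : Set V := ⋃ h : H, h • Y₀ with hYdef
  have hY₀Y : Y₀ ⊆ Y := by
    intro x hx
    exact Set.mem_iUnion.2 ⟨1, by simpa using hx⟩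
  have hsmul : ∀ (g : H) {x : V}, x ∈ Y → g • x ∈ Y := by
    intro g x hx
    obtain ⟨h, hh⟩ := Set.mem_iUnion.1 hx
    rw [Set.mem_smul_set] at hh
    obtain ⟨x₀, hx₀, rfl⟩ := hh
    exact Set.mem_iUnion.2 ⟨g * h, mul_smul g h x₀ ▸ Set.smul_mem_smul_set hx₀⟩
  have hpY : p ∈ Y := hY₀Y hpY₀
  -- rewriting reachability endpoints
  have hcast : ∀ {a b : V} (ha : a ∈ Y) (hb : b ∈ Y), a = b →
      (Γ.induce Y).Reachable ⟨a, ha⟩ ⟨b, hb⟩ := by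
    rintro a b ha hb rfl
    exact SimpleGraph.Reachable.refl _
  have htrans : ∀ (g : H) {a b : V} (ha : a ∈ Y) (hb : b ∈ Y),
      (Γ.induce Y).Reachable ⟨a, ha⟩ ⟨b, hb⟩ →
      (Γ.induce Y).Reachable ⟨g • a, hsmul g ha⟩ ⟨g • b, hsmul g hb⟩ := by
    intro g a b ha hb hr
    let φ : Γ.induce Y →g Γ.induce Y :=
      { toFun := fun x => ⟨g • (x : V), hsmul g x.2⟩
        map_rel' := fun h => hact g _ _ h }
    exact hr.map φ
  have hreachY₀ : ∀ (x : V) (hx : x ∈ Y₀),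
      (Γ.induce Y).Reachable ⟨p, hpY⟩ ⟨x, hY₀Y hx⟩ := by
    intro x hx
    rcases hx with hx | hx
    · cases hx
      exact SimpleGraph.Reachable.refl _
    · obtain ⟨t, ht, hxs⟩ := Set.mem_iUnion₂.1 hx
      have hxs' : x ∈ (w t).support := hxs
      have hsup : ∀ y ∈ ((w t).takeUntil x hxs').support, y ∈ Y := fun y hy =>
        hY₀Y (hTY₀ t ht y ((w t).support_takeUntil_subset hxs' hy))
      exact aux_walk_induce _ hsup hpY (hY₀Y (Or.inr hx))
  have hkey : ∀ h : H, (Γ.induce Y).Reachable ⟨p, hpY⟩ ⟨h • p, hsmul h hpY⟩ := by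
    intro h
    have hmem : h ∈ Subgroup.closure
        ((S : Set H) ∪ ⋃ i : Fin n, (MulAction.stabilizer H (v i) : Set H)) := by
      rw [hgen]; trivial
    induction hmem using Subgroup.closure_induction with
    | mem g hg =>
      rcases hg with hg | hg
      · have hgT : g • p ∈ T := Or.inr ⟨g, hg, rfl⟩
        have hsup : ∀ y ∈ (w (g • p)).support, y ∈ Y := fun y hy =>
          hY₀Y (hTY₀ _ hgT y hy)
        exact aux_walk_induce _ hsup hpY (hsmul g hpY)
      · obtain ⟨i, hgi⟩ := Set.mem_iUnion.1 hg
        have hvi : v i ∈ Y₀ := hTY₀ (v i) (Or.inl (Or.inr ⟨i, rfl⟩)) (v i)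
          (w (v i)).end_mem_support
        have h1 := hreachY₀ _ hvi
        have h2 := htrans g _ _ h1
        have hfix : g • v i = v i := hgi
        exact h1.trans ((hcast _ _ hfix.symm).trans h2.symm)
    | one => exact hcast _ _ (one_smul H p).symm
    | mul x y _ _ hx hy =>
      exact hx.trans ((htrans x _ _ hy).trans (hcast _ _ (mul_smul x y p).symm))
    | inv x _ hx =>
      exact ((htrans x⁻¹ _ _ hx).trans (hcast _ _ (inv_smul_smul x p))).symm
  refine ⟨Y₀, hY₀fin, hCY₀, ?_, Y₀, hY₀fin, hY₀Y, ?_⟩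
  · rw [SimpleGraph.connected_iff]
    refine ⟨?_, ⟨⟨p, hpY⟩⟩⟩
    · rintro ⟨a, ha⟩ ⟨b, hb⟩
      have key : ∀ (c : V) (hc : c ∈ Y), (Γ.induce Y).Reachable ⟨c, hc⟩ ⟨p, hpY⟩ := by
        intro c hc
        obtain ⟨h, hh⟩ := Set.mem_iUnion.1 hc
        rw [Set.mem_smul_set] at hh
        obtain ⟨x₀, hx₀, rfl⟩ := hh
        have h1 := htrans h _ _ (hreachY₀ x₀ hx₀)
        exact (h1.symm.trans (hkey h).symm)
      exact (key a ha).trans (key b hb).symm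
  · intro y hy
    obtain ⟨h, hh⟩ := Set.mem_iUnion.1 hy
    rw [Set.mem_smul_set] at hh
    obtain ⟨x₀, hx₀, rfl⟩ := hh
    exact ⟨h, x₀, hx₀, rfl⟩
end

section
/- Let α be a type and let r be a nonempty list (word) over α that is primitive, i.e. r is not the concatenation sᵏ of k ≥ 2 copies of any list s. Let m ≥ 1 and let w = r^m be the concatenation of m copies of r. Suppose a word u of length |u| ≥ |r| occurs in w at two positions i and j (meaning i + |u| ≤ |w|, j + |u| ≤ |w|, and the length-|u| factor of w starting at position i equals the length-|u| factor starting at position j, both equal to u). Then i ≡ j (mod |r|); that is, the two occurrences are in the same orbit under the shift by |r|. -/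
private lemma flatten_replicate_getElem? {α : Type*} (s : List α) :
    ∀ (k x : ℕ), x < k * s.length →
      ((List.replicate k s).flatten)[x]? = s[x % s.length]? := by
  intro k
  induction k with
  | zero => intro x hx; simp at hx
  | succ n ih =>
    intro x hx
    rw [Nat.succ_mul] at hx
    rw [List.replicate_succ, List.flatten_cons]
    rcases lt_or_ge x s.length with h | h
    · rw [List.getElem?_append_left h, Nat.mod_eq_of_lt h]
    · rw [List.getElem?_append_right h, ih (x - s.length) (by omega)]
      congr 1
      conv_rhs => rw [show x = x - s.length + s.length by omega]
      rw [Nat.add_mod_right]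

private lemma period_getElem? {α : Type*} (r : List α) (g : ℕ) (hg : 0 < g)
    (hrot : r.rotate g = r) : ∀ x, x < r.length → r[x]? = r[x % g]? := by
  intro x
  induction x using Nat.strong_induction_on with
  | _ x ih =>
    intro hx
    rcases lt_or_ge x g with h | h
    · rw [Nat.mod_eq_of_lt h]
    · have h1 : (r.rotate g)[x - g]? = r[x - g]? := by rw [hrot]
      have hlt : x - g < (r.rotate g).length := by rw [List.length_rotate]; omega
      have h2 : (r.rotate g)[x - g]? = r[(x - g + g) % r.length]? := by
        rw [List.getElem?_eq_getElem hlt, List.getElem_rotate, List.getElem?_eq_getElem]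
      have h3 : (x - g + g) % r.length = x := by
        rw [show x - g + g = x by omega, Nat.mod_eq_of_lt hx]
      rw [h3] at h2
      rw [← h2, h1, ih (x - g) (by omega) (by omega)]
      congr 1
      conv_rhs => rw [show x = x - g + g by omega, Nat.add_mod_right]

/-- Periodicity fact underlying the `C'(1/m)` property: if `r` is a nonempty primitive
word and a word `u` with `|u| ≥ |r|` occurs at positions `i` and `j` in `w = r^m`,
then `i ≡ j (mod |r|)`. -/
theorem occurrences_in_power_same_shift_orbit
    (α : Type*) (r : List α) (hr : r ≠ [])
    (hprim : ∀ (s : List α) (k : ℕ), 2 ≤ k → r ≠ (List.replicate k s).flatten)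
    (m : ℕ) (hm : 1 ≤ m)
    (w : List α) (hw : w = (List.replicate m r).flatten)
    (u : List α) (hu : r.length ≤ u.length)
    (i j : ℕ) (hi : i + u.length ≤ w.length) (hj : j + u.length ≤ w.length)
    (hiu : (w.drop i).take u.length = u) (hju : (w.drop j).take u.length = u) :
    i ≡ j [MOD r.length] := by
  set p := r.length with hp
  have hp0 : 0 < p := List.length_pos_iff.mpr hr
  have hwlen : w.length = m * p := by
    rw [hw, List.length_flatten]
    simp [List.map_replicate, ← hp, Nat.mul_comm]
  have hwget : ∀ x, x < m * p → w[x]? = r[x % p]? := by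
    intro x hx
    rw [hw]; exact flatten_replicate_getElem? r m x hx
  have hocc : ∀ t, t < u.length → w[i + t]? = w[j + t]? := by
    intro t ht
    have h1 : u[t]? = w[i + t]? := by
      rw [← hiu, List.getElem?_take, if_pos ht, List.getElem?_drop]
    have h2 : u[t]? = w[j + t]? := by
      rw [← hju, List.getElem?_take, if_pos ht, List.getElem?_drop]
    rw [← h1, ← h2]
  set d := (j + (p - i % p)) % p with hd
  have hdp : d < p := Nat.mod_lt _ hp0
  have him : i % p < p := Nat.mod_lt _ hp0
  -- r[a]? = r[(a + d) % p]? for all a < p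
  have hshift : ∀ a, a < p → r[a]? = r[(a + d) % p]? := by
    intro a ha
    set t := (p - i % p + a) % p with ht
    have htp : t < p := Nat.mod_lt _ hp0
    have hitmod : (i + t) % p = a := by
      rw [ht, Nat.add_mod_mod, ← Nat.mod_add_mod,
        show i % p + (p - i % p + a) = p + a by omega,
        Nat.add_mod_left, Nat.mod_eq_of_lt ha]
    have hjtmod : (j + t) % p = (a + d) % p := by
      rw [ht, Nat.add_mod_mod, hd, Nat.add_mod_mod]
      congr 1
      omega
    have hiw : w[i + t]? = r[a]? := by
      rw [hwget (i + t) (by omega), hitmod]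
    have hjw : w[j + t]? = r[(a + d) % p]? := by
      rw [hwget (j + t) (by omega), hjtmod]
    rw [← hiw, ← hjw, hocc t (by omega)]
  -- r.rotate d = r
  have hrot : r.rotate d = r := by
    apply List.ext_getElem?
    intro n
    rcases lt_or_ge n p with h | h
    · have hn : n < (r.rotate d).length := by rw [List.length_rotate]; omega
      have key : (r.rotate d)[n]? = r[(n + d) % p]? := by
        rw [List.getElem?_eq_getElem hn,
          List.getElem?_eq_getElem (show (n + d) % p < r.length from Nat.mod_lt _ hp0)]
        exact congrArg some (List.getElem_rotate r d n hn)
      rw [key, ← hshift n h]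
    · rw [List.getElem?_eq_none, List.getElem?_eq_none]
      · omega
      · rw [List.length_rotate]; omega
  -- conclude
  rcases Nat.eq_zero_or_pos d with hd0 | hd0
  · -- d = 0 gives i % p = j % p
    have : (j % p + (p - i % p)) % p = 0 := by rwa [Nat.mod_add_mod, ← hd]
    have hjm : j % p < p := Nat.mod_lt _ hp0
    show i % p = j % p
    rcases lt_or_ge (j % p + (p - i % p)) p with h | h
    · rw [Nat.mod_eq_of_lt h] at this; omega
    · rw [Nat.mod_eq_sub_mod h, Nat.mod_eq_of_lt (by omega)] at this; omega
  · -- d > 0 contradicts primitivity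
    exfalso
    set S : Set ℕ := {e | 0 < e ∧ r.rotate e = r} with hS
    have hdS : d ∈ S := ⟨hd0, hrot⟩
    set g := sInf S with hginf
    obtain ⟨hg0, hgrot⟩ : g ∈ S := Nat.sInf_mem ⟨d, hdS⟩
    have hgd : g ≤ d := Nat.sInf_le hdS
    have rot_mul : ∀ n, r.rotate (g * n) = r := by
      intro n
      induction n with
      | zero => simp
      | succ k ihk =>
        rw [Nat.mul_succ, ← List.rotate_rotate, ihk, hgrot]
    have hdvd : ∀ e, r.rotate e = r → g ∣ e := by
      intro e he
      have h1 : r.rotate (e % g) = r := by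
        conv_lhs => rw [show e % g = g * (e / g) + e % g - g * (e / g) by omega]
        rw [show g * (e / g) + e % g - g * (e / g) = e % g by omega]
        have : (r.rotate (g * (e / g))).rotate (e % g) = r := by
          rw [List.rotate_rotate, Nat.div_add_mod, he]
        rwa [rot_mul] at this
      by_contra hne
      have hpos : 0 < e % g := Nat.pos_of_ne_zero (fun h0 => hne (Nat.dvd_of_mod_eq_zero h0))
      have := Nat.sInf_le (show e % g ∈ S from ⟨hpos, h1⟩)
      have : e % g < g := Nat.mod_lt _ hg0
      omega
    obtain ⟨k, hk⟩ := hdvd p (List.rotate_length r)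
    have hk2 : 2 ≤ k := by
      rcases Nat.lt_or_ge k 2 with h | h
      · interval_cases k <;> omega
      · exact h
    apply hprim (r.take g) k hk2
    have hsg : (r.take g).length = g := by
      rw [List.length_take]; omega
    apply List.ext_getElem?
    intro x
    rcases lt_or_ge x p with h | h
    · rw [flatten_replicate_getElem? (r.take g) k x
          (by rw [hsg, Nat.mul_comm, ← hk]; exact h),
        hsg, List.getElem?_take, if_pos (Nat.mod_lt _ hg0)]
      exact period_getElem? r g hg0 hgrot x h
    · rw [List.getElem?_eq_none (by omega), List.getElem?_eq_none]
      rw [List.length_flatten, List.map_replicate, hsg, List.sum_replicate,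
        smul_eq_mul, Nat.mul_comm, ← hk]
      exact h
end
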